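/- arXiv:1308.4454 — 4 statements merged into one kernel-verified Lean document; each statement's English description precedes it below -/
import Mathlib

section
/- Let φ : ℝ → E be twice continuously differentiable on [0,T]. Then Δt · Σ_{n=0}^{N−1} ‖d_t φ^{n+1} − φ′(t_{n+1})‖² ≤ (Δt²/3) · ∫_0^T ‖φ″(t)‖² dt. (This is the backward-difference consistency estimate used in the consistency-error lemma of the paper.) -/
/-!
On each step `[a, b]`, integration by parts gives the Taylor remainder
`(b - a) • φ' b - (φ b - φ a) = ∫_a^b (s - a) • φ'' s`, so by Cauchy–Schwarz the squared
consistency error is at most `(b - a)⁻² · (∫_a^b (s - a)² ds) · ∫_a^b ‖φ''‖² = (b - a)/3 · ∫_a^b ‖φ''‖²`.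
Multiplying by `Δt` and summing over the steps of the uniform grid gives the estimate.
-/

open MeasureTheory Set

theorem sq_integral_norm_mul_norm_le {α E F : Type*} [MeasurableSpace α] {μ : Measure α}
    [NormedAddCommGroup E] [NormedAddCommGroup F] {f : α → E} {g : α → F}
    (hf : MemLp f 2 μ) (hg : MemLp g 2 μ) :
    (∫ x, ‖f x‖ * ‖g x‖ ∂μ) ^ 2 ≤ (∫ x, ‖f x‖ ^ 2 ∂μ) * ∫ x, ‖g x‖ ^ 2 ∂μ := by
  have holder := integral_mul_norm_le_Lp_mul_Lq Real.HolderConjugate.two_two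
    (f := fun x => ‖f x‖) (g := fun x => ‖g x‖) (by simpa using hf.norm) (by simpa using hg.norm)
  simp only [norm_norm, Real.rpow_two, ← Real.sqrt_eq_rpow] at holder
  calc (∫ x, ‖f x‖ * ‖g x‖ ∂μ) ^ 2
      ≤ (√(∫ x, ‖f x‖ ^ 2 ∂μ) * √(∫ x, ‖g x‖ ^ 2 ∂μ)) ^ 2 :=
        pow_le_pow_left₀ (integral_nonneg fun _ => by positivity) holder 2
    _ = (∫ x, ‖f x‖ ^ 2 ∂μ) * ∫ x, ‖g x‖ ^ 2 ∂μ := by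
        rw [mul_pow, Real.sq_sqrt (integral_nonneg fun _ => by positivity),
          Real.sq_sqrt (integral_nonneg fun _ => by positivity)]

section Interval

variable {E : Type*} [NormedAddCommGroup E] {a b : ℝ}

theorem ContinuousOn.memLp_two_restrict_Ioc {f : ℝ → E} (hf : ContinuousOn f (Icc a b)) :
    MemLp f 2 (volume.restrict (Ioc a b)) :=
  (memLp_two_iff_integrable_sq_norm
    ((hf.mono Ioc_subset_Icc_self).aestronglyMeasurable measurableSet_Ioc)).2
    ((hf.norm.pow 2).integrableOn_Icc.mono_set Ioc_subset_Icc_self)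

theorem sq_intervalIntegral_norm_mul_norm_le {F : Type*} [NormedAddCommGroup F]
    {f : ℝ → E} {g : ℝ → F} (hab : a ≤ b)
    (hf : ContinuousOn f (Icc a b)) (hg : ContinuousOn g (Icc a b)) :
    (∫ s in a..b, ‖f s‖ * ‖g s‖) ^ 2 ≤ (∫ s in a..b, ‖f s‖ ^ 2) * ∫ s in a..b, ‖g s‖ ^ 2 := by
  simp only [intervalIntegral.integral_of_le hab]
  exact sq_integral_norm_mul_norm_le hf.memLp_two_restrict_Ioc hg.memLp_two_restrict_Ioc

theorem norm_intervalIntegral_sub_smul_sq_le [NormedSpace ℝ E] {g : ℝ → E} (hab : a ≤ b)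
    (hg : ContinuousOn g (Icc a b)) :
    ‖∫ s in a..b, (s - a) • g s‖ ^ 2 ≤ (b - a) ^ 3 / 3 * ∫ s in a..b, ‖g s‖ ^ 2 := by
  have hnorm : ‖∫ s in a..b, (s - a) • g s‖ ≤ ∫ s in a..b, ‖s - a‖ * ‖g s‖ := by
    simpa only [norm_smul] using
      intervalIntegral.norm_integral_le_integral_norm (f := fun s => (s - a) • g s) hab
  have hweight : ∫ s in a..b, ‖s - a‖ ^ 2 = (b - a) ^ 3 / 3 := by
    simp only [Real.norm_eq_abs, sq_abs]
    rw [intervalIntegral.integral_comp_sub_right (· ^ 2), sub_self, integral_pow]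
    ring
  calc ‖∫ s in a..b, (s - a) • g s‖ ^ 2
      ≤ (∫ s in a..b, ‖s - a‖ * ‖g s‖) ^ 2 := pow_le_pow_left₀ (norm_nonneg _) hnorm 2
    _ ≤ (∫ s in a..b, ‖s - a‖ ^ 2) * ∫ s in a..b, ‖g s‖ ^ 2 :=
        sq_intervalIntegral_norm_mul_norm_le hab (by fun_prop) hg
    _ = (b - a) ^ 3 / 3 * ∫ s in a..b, ‖g s‖ ^ 2 := by rw [hweight]

theorem integral_sub_smul_second_deriv_eq [NormedSpace ℝ E] [CompleteSpace E]
    {φ φ' φ'' : ℝ → E} (hab : a ≤ b)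
    (hφ : ∀ t ∈ Icc a b, HasDerivWithinAt φ (φ' t) (Icc a b) t)
    (hφ' : ∀ t ∈ Icc a b, HasDerivWithinAt φ' (φ'' t) (Icc a b) t)
    (hφ'' : ContinuousOn φ'' (Icc a b)) :
    ∫ s in a..b, (s - a) • φ'' s = (b - a) • φ' b - (φ b - φ a) := by
  have hφ'c : ContinuousOn φ' (Icc a b) := fun t ht => (hφ' t ht).continuousWithinAt
  have ftc : ∫ s in a..b, φ' s = φ b - φ a :=
    intervalIntegral.integral_eq_sub_of_hasDerivAt_of_le hab
      (fun t ht => (hφ t ht).continuousWithinAt)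
      (fun t ht => (hφ t (Ioo_subset_Icc_self ht)).hasDerivAt (Icc_mem_nhds ht.1 ht.2))
      (hφ'c.intervalIntegrable_of_Icc hab)
  rw [← uIcc_of_le hab] at hφ' hφ''
  rw [intervalIntegral.integral_smul_deriv_eq_deriv_smul_of_hasDerivWithinAt
    (u := fun s => s - a) (u' := fun _ => 1)
    (fun t _ => ((hasDerivAt_id t).sub_const a).hasDerivWithinAt) hφ'
    intervalIntegrable_const (hφ''.intervalIntegrable)]
  simp only [sub_self, zero_smul, sub_zero, one_smul, ftc]

theorem norm_slope_sub_deriv_right_sq_le [NormedSpace ℝ E] [CompleteSpace E]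
    {φ φ' φ'' : ℝ → E} (hab : a < b)
    (hφ : ∀ t ∈ Icc a b, HasDerivWithinAt φ (φ' t) (Icc a b) t)
    (hφ' : ∀ t ∈ Icc a b, HasDerivWithinAt φ' (φ'' t) (Icc a b) t)
    (hφ'' : ContinuousOn φ'' (Icc a b)) :
    ‖(b - a)⁻¹ • (φ b - φ a) - φ' b‖ ^ 2 ≤ (b - a) / 3 * ∫ s in a..b, ‖φ'' s‖ ^ 2 := by
  have hh : 0 < b - a := sub_pos.2 hab
  have remainder : (b - a)⁻¹ • (φ b - φ a) - φ' b = -(b - a)⁻¹ • ∫ s in a..b, (s - a) • φ'' s := by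
    rw [integral_sub_smul_second_deriv_eq hab.le hφ hφ' hφ'', neg_smul,
      smul_sub (b - a)⁻¹ ((b - a) • φ' b), smul_smul, inv_mul_cancel₀ hh.ne', one_smul]
    abel
  rw [remainder, norm_smul, mul_pow, norm_neg, Real.norm_of_nonneg (inv_nonneg.2 hh.le)]
  calc (b - a)⁻¹ ^ 2 * ‖∫ s in a..b, (s - a) • φ'' s‖ ^ 2
      ≤ (b - a)⁻¹ ^ 2 * ((b - a) ^ 3 / 3 * ∫ s in a..b, ‖φ'' s‖ ^ 2) := by
        gcongr
        exact norm_intervalIntegral_sub_smul_sq_le hab.le hφ''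
    _ = (b - a) / 3 * ∫ s in a..b, ‖φ'' s‖ ^ 2 := by
        field_simp

end Interval

theorem backward_difference_consistency_general
    {E : Type*} [NormedAddCommGroup E] [NormedSpace ℝ E] [CompleteSpace E]
    (T : ℝ) (hT : 0 < T) (N : ℕ)
    (Δt : ℝ) (hΔt : Δt = T / N)
    (φ φ' φ'' : ℝ → E)
    (hφ' : ∀ t ∈ Set.Icc (0:ℝ) T, HasDerivWithinAt φ (φ' t) (Set.Icc (0:ℝ) T) t)
    (hφ'' : ∀ t ∈ Set.Icc (0:ℝ) T, HasDerivWithinAt φ' (φ'' t) (Set.Icc (0:ℝ) T) t)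
    (hφ''c : ContinuousOn φ'' (Set.Icc (0:ℝ) T)) :
    Δt * ∑ n ∈ Finset.range N,
        ‖Δt⁻¹ • (φ (((n : ℝ) + 1) * Δt) - φ ((n : ℝ) * Δt)) - φ' (((n : ℝ) + 1) * Δt)‖ ^ 2
      ≤ (Δt ^ 2 / 3) * ∫ t in (0:ℝ)..T, ‖φ'' t‖ ^ 2 := by
  rcases N.eq_zero_or_pos with rfl | hN
  · simp [hΔt]
  have hΔt_pos : 0 < Δt := by rw [hΔt]; positivity
  have hNΔt : (N : ℝ) * Δt = T := by rw [hΔt]; field_simp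
  have hstep : ∀ n < N, Icc ((n : ℝ) * Δt) ((n + 1) * Δt) ⊆ Icc 0 T := fun n hn =>
    Icc_subset_Icc (by positivity) (hNΔt ▸ by gcongr; exact_mod_cast hn)
  have hlocal : ∀ n ∈ Finset.range N,
      ‖Δt⁻¹ • (φ ((n + 1) * Δt) - φ (n * Δt)) - φ' ((n + 1) * Δt)‖ ^ 2
        ≤ Δt / 3 * ∫ s in n * Δt..(n + 1) * Δt, ‖φ'' s‖ ^ 2 := fun n hn => by
    have hsub := hstep n (Finset.mem_range.1 hn)
    have hlen : ((n : ℝ) + 1) * Δt - n * Δt = Δt := by ring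
    simpa only [hlen] using norm_slope_sub_deriv_right_sq_le (by linarith)
      (fun t ht => (hφ' t (hsub ht)).mono hsub) (fun t ht => (hφ'' t (hsub ht)).mono hsub)
      (hφ''c.mono hsub)
  have hadjacent := intervalIntegral.sum_integral_adjacent_intervals
    (a := fun n : ℕ => (n : ℝ) * Δt) (f := fun s => ‖φ'' s‖ ^ 2) (μ := volume) (n := N)
    fun n hn => ((hφ''c.norm.pow 2).mono (by simpa using hstep n hn)).intervalIntegrable_of_Icc
      (by gcongr; simp)
  push_cast at hadjacent
  calc Δt * ∑ n ∈ Finset.range N,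
        ‖Δt⁻¹ • (φ (((n : ℝ) + 1) * Δt) - φ ((n : ℝ) * Δt)) - φ' (((n : ℝ) + 1) * Δt)‖ ^ 2
      ≤ Δt * ∑ n ∈ Finset.range N, Δt / 3 * ∫ s in n * Δt..(n + 1) * Δt, ‖φ'' s‖ ^ 2 :=
        mul_le_mul_of_nonneg_left (Finset.sum_le_sum hlocal) hΔt_pos.le
    _ = Δt ^ 2 / 3 * ∫ t in (0:ℝ)..T, ‖φ'' t‖ ^ 2 := by
        rw [← Finset.mul_sum, hadjacent, zero_mul, hNΔt]
        ring

/-- Backward-difference consistency estimate: for φ twice continuously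
differentiable on [0,T], with Δt = T/N and tₙ = n·Δt,
Δt · Σ_{n=0}^{N−1} ‖d_t φ^{n+1} − φ′(t_{n+1})‖² ≤ (Δt²/3) · ∫₀^T ‖φ″‖². -/
theorem backward_difference_consistency
    {E : Type*} [NormedAddCommGroup E] [NormedSpace ℝ E] [CompleteSpace E]
    (T : ℝ) (hT : 0 < T) (N : ℕ) (hN : 1 ≤ N)
    (Δt : ℝ) (hΔt : Δt = T / N)
    (φ φ' φ'' : ℝ → E)
    (hφ' : ∀ t ∈ Set.Icc (0:ℝ) T, HasDerivWithinAt φ (φ' t) (Set.Icc (0:ℝ) T) t)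
    (hφ'' : ∀ t ∈ Set.Icc (0:ℝ) T, HasDerivWithinAt φ' (φ'' t) (Set.Icc (0:ℝ) T) t)
    (hφ''c : ContinuousOn φ'' (Set.Icc (0:ℝ) T)) :
    Δt * ∑ n ∈ Finset.range N,
        ‖Δt⁻¹ • (φ (((n : ℝ) + 1) * Δt) - φ ((n : ℝ) * Δt)) - φ' (((n : ℝ) + 1) * Δt)‖ ^ 2
      ≤ (Δt ^ 2 / 3) * ∫ t in (0:ℝ)..T, ‖φ'' t‖ ^ 2 :=
  backward_difference_consistency_general T hT N Δt hΔt φ φ' φ'' hφ' hφ'' hφ''c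
end

section
/- Assume N ≥ 2 and let φ : ℝ → E be three times continuously differentiable on [0,T]. Then Δt · Σ_{n=1}^{N−1} ‖d_{tt} φ^{n+1} − (φ′(t_{n+1}) − φ′(t_n))/Δt‖² ≤ 2·Δt² · ∫_0^T ‖φ‴(t)‖² dt. (Consistency estimate for the discrete second time difference from the consistency-error lemma of the paper.) -/
/-!
With `h = Δt` and `t = tₙ`, Taylor's formula with integral remainder, expanded at `t` for
`φ (t ± h)` and `φ' (t + h)`, represents `h² (d_tt φⁿ⁺¹ - (φ' (t + h) - φ' t) / h)` as
`∫_t^{t+h} ((t+h-x)²/2 - h (t+h-x)) φ''' x dx - ∫_{t-h}^t ((t-h-x)²/2) φ''' x dx`.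
Both kernels are bounded by `h²/2`, so the error is at most `½ ∫_{t-h}^{t+h} ‖φ'''‖`, and by
Cauchy–Schwarz its square is at most `(h/2) ∫_{t-h}^{t+h} ‖φ'''‖²`. Summing over `n`, every cell
`[tₖ, tₖ₊₁]` lies in at most two of the windows `[tₙ₋₁, tₙ₊₁]`.
-/

open MeasureTheory Set

theorem sq_intervalIntegral_le {g : ℝ → ℝ} {a b : ℝ} (hab : a ≤ b)
    (hg : IntervalIntegrable g volume a b)
    (hg2 : IntervalIntegrable (fun x => g x ^ 2) volume a b) :
    (∫ x in a..b, g x) ^ 2 ≤ (b - a) * ∫ x in a..b, g x ^ 2 := by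
  obtain rfl | hlt := hab.eq_or_lt
  · simp
  set S := ∫ x in a..b, g x
  set Q := ∫ x in a..b, g x ^ 2
  -- expand `0 ≤ ∫ ((b - a) g - S)²`
  have h0 : 0 ≤ ∫ x in a..b, ((b - a) ^ 2 * g x ^ 2 - 2 * (b - a) * S * g x + S ^ 2) :=
    intervalIntegral.integral_nonneg hab fun x _ => by nlinarith [sq_nonneg ((b - a) * g x - S)]
  rw [intervalIntegral.integral_add ((hg2.const_mul _).sub (hg.const_mul _))
      intervalIntegrable_const, intervalIntegral.integral_sub (hg2.const_mul _) (hg.const_mul _),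
    intervalIntegral.integral_const_mul, intervalIntegral.integral_const_mul,
    intervalIntegral.integral_const, smul_eq_mul] at h0
  nlinarith

theorem sum_integral_sub_add_le {f : ℝ → ℝ} {h : ℝ} {N : ℕ} (hh : 0 ≤ h)
    (hf : IntervalIntegrable f volume 0 (N * h)) (hf0 : ∀ x ∈ Icc 0 (N * h), 0 ≤ f x) :
    ∑ n ∈ Finset.Ico 1 N, ∫ x in n * h - h..n * h + h, f x ≤ 2 * ∫ x in 0..N * h, f x := by
  set I : ℕ → ℝ := fun k => ∫ x in k * h..(k + 1 : ℕ) * h, f x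
  have hkN : ∀ k : ℕ, k ≤ N → (k : ℝ) * h ∈ Icc 0 (N * h) := fun k hk =>
    ⟨by positivity, by gcongr⟩
  have hint : ∀ k < N, IntervalIntegrable f volume (k * h) ((k + 1 : ℕ) * h) := fun k hk =>
    hf.mono_set (uIcc_subset_uIcc (Icc_subset_uIcc (hkN k hk.le))
      (Icc_subset_uIcc (hkN (k + 1) hk)))
  have hI0 : ∀ k < N, 0 ≤ I k := fun k hk =>
    intervalIntegral.integral_nonneg (by gcongr; omega) fun x hx =>
      hf0 x ⟨(hkN k hk.le).1.trans hx.1, hx.2.trans (hkN (k + 1) hk).2⟩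
  have htotal : ∑ k ∈ Finset.range N, I k = ∫ x in 0..N * h, f x := by
    simpa [I] using
      intervalIntegral.sum_integral_adjacent_intervals (a := fun k : ℕ => (k : ℝ) * h) hint
  obtain _ | M := N
  · simp
  have hwindow : ∀ k ∈ Finset.range M,
      ∫ x in ((1 + k : ℕ) : ℝ) * h - h..((1 + k : ℕ) : ℝ) * h + h, f x = I k + I (k + 1) := by
    intro k hk
    rw [Finset.mem_range] at hk
    rw [intervalIntegral.integral_add_adjacent_intervals (hint k (by omega))
      (hint (k + 1) (by omega))]
    push_cast
    ring_nf
  rw [Finset.sum_Ico_eq_sum_range, Nat.add_sub_cancel, Finset.sum_congr rfl hwindow,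
    Finset.sum_add_distrib, ← htotal, two_mul]
  gcongr ?_ + ?_
  · rw [Finset.sum_range_succ]
    linarith [hI0 M (by omega)]
  · rw [Finset.sum_range_succ']
    linarith [hI0 0 (by omega)]

section

variable {E : Type*} [NormedAddCommGroup E] [NormedSpace ℝ E]

theorem hasDerivAt_add_sub_smul {f f' f'' : ℝ → E} {x : ℝ} (c : ℝ)
    (hf : HasDerivAt f (f' x) x) (hf' : HasDerivAt f' (f'' x) x) :
    HasDerivAt (fun y => f y + (c - y) • f' y) ((c - x) • f'' x) x :=
  (hf.add (((hasDerivAt_id' x).const_sub c).smul hf')).congr_deriv (by module)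

theorem hasDerivAt_add_sub_smul_add_sub_sq_smul {f f' f'' f''' : ℝ → E} {x : ℝ} (c : ℝ)
    (hf : HasDerivAt f (f' x) x) (hf' : HasDerivAt f' (f'' x) x)
    (hf'' : HasDerivAt f'' (f''' x) x) :
    HasDerivAt (fun y => f y + (c - y) • f' y + ((c - y) ^ 2 / 2) • f'' y)
      (((c - x) ^ 2 / 2) • f''' x) x := by
  have hsq : HasDerivAt (fun y : ℝ => (c - y) ^ 2 / 2) (-(c - x)) x :=
    ((((hasDerivAt_id' x).const_sub c).pow 2).div_const 2).congr_deriv (by ring)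
  exact ((hasDerivAt_add_sub_smul c hf hf').add (hsq.smul hf'')).congr_deriv (by module)

theorem ContinuousOn.intervalIntegrable_smul_of_subset {k : ℝ → ℝ} {g : ℝ → E} {s : Set ℝ}
    {a b : ℝ} (hab : a ≤ b) (hs : Icc a b ⊆ s) (hk : Continuous k) (hg : ContinuousOn g s) :
    IntervalIntegrable (fun x => k x • g x) volume a b :=
  (hk.continuousOn.smul (hg.mono hs)).intervalIntegrable_of_Icc hab

theorem norm_integral_smul_le_of_abs_le {k : ℝ → ℝ} {g : ℝ → E} {a b M : ℝ} (hab : a ≤ b)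
    (hk : ∀ x ∈ Ioc a b, |k x| ≤ M) (hg : IntervalIntegrable (fun x => ‖g x‖) volume a b) :
    ‖∫ x in a..b, k x • g x‖ ≤ M * ∫ x in a..b, ‖g x‖ := by
  rw [← intervalIntegral.integral_const_mul]
  refine intervalIntegral.norm_integral_le_of_norm_le hab
    (Filter.Eventually.of_forall fun x hx => ?_) (hg.const_mul M)
  rw [norm_smul, Real.norm_eq_abs]
  exact mul_le_mul_of_nonneg_right (hk x hx) (norm_nonneg _)

section Taylor

variable {φ φ' φ'' φ''' : ℝ → E} {s : Set ℝ} {a b : ℝ}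

theorem continuousOn_Icc_of_hasDerivWithinAt {f f' : ℝ → E} (hs : Icc a b ⊆ s)
    (hf : ∀ x ∈ s, HasDerivWithinAt f (f' x) s x) : ContinuousOn f (Icc a b) :=
  fun x hx => (hf x (hs hx)).continuousWithinAt.mono hs

theorem hasDerivAt_of_hasDerivWithinAt_of_mem_Ioo {f f' : ℝ → E} {x : ℝ} (hs : Icc a b ⊆ s)
    (hf : ∀ x ∈ s, HasDerivWithinAt f (f' x) s x) (hx : x ∈ Ioo a b) : HasDerivAt f (f' x) x :=
  (hf x (hs (Ioo_subset_Icc_self hx))).hasDerivAt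
    (Filter.mem_of_superset (Icc_mem_nhds hx.1 hx.2) hs)

variable [CompleteSpace E]

theorem integral_sub_smul_eq (c : ℝ) (hab : a ≤ b) (hs : Icc a b ⊆ s)
    (hφ'' : ∀ x ∈ s, HasDerivWithinAt φ' (φ'' x) s x)
    (hφ''' : ∀ x ∈ s, HasDerivWithinAt φ'' (φ''' x) s x)
    (hφ'''c : ContinuousOn φ''' s) :
    ∫ x in a..b, (c - x) • φ''' x = (φ' b + (c - b) • φ'' b) - (φ' a + (c - a) • φ'' a) :=
  intervalIntegral.integral_eq_sub_of_hasDerivAt_of_le hab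
    ((continuousOn_Icc_of_hasDerivWithinAt hs hφ'').add
      ((continuous_const.sub continuous_id).continuousOn.smul
        (continuousOn_Icc_of_hasDerivWithinAt hs hφ''')))
    (fun _ hx => hasDerivAt_add_sub_smul c
      (hasDerivAt_of_hasDerivWithinAt_of_mem_Ioo hs hφ'' hx)
      (hasDerivAt_of_hasDerivWithinAt_of_mem_Ioo hs hφ''' hx))
    (hφ'''c.intervalIntegrable_smul_of_subset hab hs (by fun_prop))

theorem integral_sub_sq_smul_eq (c : ℝ) (hab : a ≤ b) (hs : Icc a b ⊆ s)
    (hφ' : ∀ x ∈ s, HasDerivWithinAt φ (φ' x) s x)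
    (hφ'' : ∀ x ∈ s, HasDerivWithinAt φ' (φ'' x) s x)
    (hφ''' : ∀ x ∈ s, HasDerivWithinAt φ'' (φ''' x) s x)
    (hφ'''c : ContinuousOn φ''' s) :
    ∫ x in a..b, ((c - x) ^ 2 / 2) • φ''' x
      = (φ b + (c - b) • φ' b + ((c - b) ^ 2 / 2) • φ'' b)
        - (φ a + (c - a) • φ' a + ((c - a) ^ 2 / 2) • φ'' a) :=
  intervalIntegral.integral_eq_sub_of_hasDerivAt_of_le hab
    (((continuousOn_Icc_of_hasDerivWithinAt hs hφ').add
      ((continuous_const.sub continuous_id).continuousOn.smul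
        (continuousOn_Icc_of_hasDerivWithinAt hs hφ''))).add
      ((by fun_prop : Continuous fun x : ℝ => (c - x) ^ 2 / 2).continuousOn.smul
        (continuousOn_Icc_of_hasDerivWithinAt hs hφ''')))
    (fun _ hx => hasDerivAt_add_sub_smul_add_sub_sq_smul c
      (hasDerivAt_of_hasDerivWithinAt_of_mem_Ioo hs hφ' hx)
      (hasDerivAt_of_hasDerivWithinAt_of_mem_Ioo hs hφ'' hx)
      (hasDerivAt_of_hasDerivWithinAt_of_mem_Ioo hs hφ''' hx))
    (hφ'''c.intervalIntegrable_smul_of_subset hab hs (by fun_prop))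

end Taylor

section SecondDifference

variable [CompleteSpace E] {φ φ' φ'' φ''' : ℝ → E} {s : Set ℝ} {t h : ℝ}

theorem secondDifference_sub_eq_integral (hh : 0 ≤ h) (hs : Icc (t - h) (t + h) ⊆ s)
    (hφ' : ∀ x ∈ s, HasDerivWithinAt φ (φ' x) s x)
    (hφ'' : ∀ x ∈ s, HasDerivWithinAt φ' (φ'' x) s x)
    (hφ''' : ∀ x ∈ s, HasDerivWithinAt φ'' (φ''' x) s x)
    (hφ'''c : ContinuousOn φ''' s) :
    φ (t + h) - (2 : ℝ) • φ t + φ (t - h) - h • (φ' (t + h) - φ' t)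
      = (∫ x in t..t + h, ((t + h - x) ^ 2 / 2 - h * (t + h - x)) • φ''' x)
        - ∫ x in t - h..t, ((t - h - x) ^ 2 / 2) • φ''' x := by
  have hl : Icc (t - h) t ⊆ s := (Icc_subset_Icc_right (by linarith)).trans hs
  have hr : Icc t (t + h) ⊆ s := (Icc_subset_Icc_left (by linarith)).trans hs
  have htr : t ≤ t + h := by linarith
  have hsplit : ∫ x in t..t + h, ((t + h - x) ^ 2 / 2 - h * (t + h - x)) • φ''' x
      = (∫ x in t..t + h, ((t + h - x) ^ 2 / 2) • φ''' x)
        - h • ∫ x in t..t + h, (t + h - x) • φ''' x := by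
    have hI : IntervalIntegrable (fun x => h • ((t + h - x) • φ''' x)) volume t (t + h) :=
      (hφ'''c.intervalIntegrable_smul_of_subset htr hr (by fun_prop)).smul h
    rw [← intervalIntegral.integral_smul, ← intervalIntegral.integral_sub
      (hφ'''c.intervalIntegrable_smul_of_subset htr hr (by fun_prop)) hI]
    exact intervalIntegral.integral_congr fun x _ => by module
  rw [hsplit, integral_sub_sq_smul_eq _ htr hr hφ' hφ'' hφ''' hφ'''c,
    integral_sub_sq_smul_eq _ (by linarith) hl hφ' hφ'' hφ''' hφ'''c,
    integral_sub_smul_eq _ htr hr hφ'' hφ''' hφ'''c]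
  module

theorem norm_secondDifferenceQuotient_sub_le (hh : 0 < h) (hs : Icc (t - h) (t + h) ⊆ s)
    (hφ' : ∀ x ∈ s, HasDerivWithinAt φ (φ' x) s x)
    (hφ'' : ∀ x ∈ s, HasDerivWithinAt φ' (φ'' x) s x)
    (hφ''' : ∀ x ∈ s, HasDerivWithinAt φ'' (φ''' x) s x)
    (hφ'''c : ContinuousOn φ''' s) :
    ‖(h ^ 2)⁻¹ • (φ (t + h) - (2 : ℝ) • φ t + φ (t - h)) - h⁻¹ • (φ' (t + h) - φ' t)‖
      ≤ (∫ x in t - h..t + h, ‖φ''' x‖) / 2 := by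
  have hl : Icc (t - h) t ⊆ s := (Icc_subset_Icc_right (by linarith)).trans hs
  have hr : Icc t (t + h) ⊆ s := (Icc_subset_Icc_left (by linarith)).trans hs
  have hnorm : ∀ {a b : ℝ}, a ≤ b → Icc a b ⊆ s →
      IntervalIntegrable (fun x => ‖φ''' x‖) volume a b :=
    fun hab hab_s => (hφ'''c.mono hab_s).norm.intervalIntegrable_of_Icc hab
  have hX := norm_integral_smul_le_of_abs_le (M := h ^ 2 / 2) (g := φ''')
    (k := fun x => (t + h - x) ^ 2 / 2 - h * (t + h - x)) (by linarith)
    (fun x hx => abs_le.2 ⟨by nlinarith [hx.1, hx.2], by nlinarith [hx.1, hx.2]⟩)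
    (hnorm (by linarith) hr)
  have hY := norm_integral_smul_le_of_abs_le (M := h ^ 2 / 2) (g := φ''')
    (k := fun x => (t - h - x) ^ 2 / 2) (by linarith)
    (fun x hx => abs_le.2 ⟨by nlinarith [hx.1, hx.2], by nlinarith [hx.1, hx.2]⟩)
    (hnorm (by linarith) hl)
  rw [show (h ^ 2)⁻¹ • (φ (t + h) - (2 : ℝ) • φ t + φ (t - h)) - h⁻¹ • (φ' (t + h) - φ' t)
      = (h ^ 2)⁻¹ • (φ (t + h) - (2 : ℝ) • φ t + φ (t - h) - h • (φ' (t + h) - φ' t)) by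
    rw [smul_sub _ _ (h • _), smul_smul, show (h ^ 2)⁻¹ * h = h⁻¹ by field_simp],
    secondDifference_sub_eq_integral hh.le hs hφ' hφ'' hφ''' hφ'''c, norm_smul,
    Real.norm_of_nonneg (by positivity),
    ← intervalIntegral.integral_add_adjacent_intervals (hnorm (by linarith) hl)
      (hnorm (by linarith) hr)]
  calc (h ^ 2)⁻¹ * ‖_ - _‖
      ≤ (h ^ 2)⁻¹ * (h ^ 2 / 2 * (∫ x in t..t + h, ‖φ''' x‖)
          + h ^ 2 / 2 * ∫ x in t - h..t, ‖φ''' x‖) := by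
        gcongr
        exact (norm_sub_le _ _).trans (add_le_add hX hY)
    _ = _ := by field_simp; ring

theorem sq_norm_secondDifferenceQuotient_sub_le (hh : 0 < h) (hs : Icc (t - h) (t + h) ⊆ s)
    (hφ' : ∀ x ∈ s, HasDerivWithinAt φ (φ' x) s x)
    (hφ'' : ∀ x ∈ s, HasDerivWithinAt φ' (φ'' x) s x)
    (hφ''' : ∀ x ∈ s, HasDerivWithinAt φ'' (φ''' x) s x)
    (hφ'''c : ContinuousOn φ''' s) :
    ‖(h ^ 2)⁻¹ • (φ (t + h) - (2 : ℝ) • φ t + φ (t - h)) - h⁻¹ • (φ' (t + h) - φ' t)‖ ^ 2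
      ≤ h / 2 * ∫ x in t - h..t + h, ‖φ''' x‖ ^ 2 := by
  have hts : t - h ≤ t + h := by linarith
  have hcont := (hφ'''c.mono hs).norm
  calc _ ≤ ((∫ x in t - h..t + h, ‖φ''' x‖) / 2) ^ 2 :=
        pow_le_pow_left₀ (norm_nonneg _)
          (norm_secondDifferenceQuotient_sub_le hh hs hφ' hφ'' hφ''' hφ'''c) 2
    _ ≤ (t + h - (t - h)) * (∫ x in t - h..t + h, ‖φ''' x‖ ^ 2) / 4 := by
        linarith [sq_intervalIntegral_le hts (hcont.intervalIntegrable_of_Icc hts)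
          ((hcont.pow 2).intervalIntegrable_of_Icc hts)]
    _ = _ := by ring

end SecondDifference

end

/-- Consistency estimate for the discrete second time difference: for φ three
times continuously differentiable on [0,T], with Δt = T/N, tₙ = n·Δt and N ≥ 2,
Δt · Σ_{n=1}^{N−1} ‖d_{tt} φ^{n+1} − (φ′(t_{n+1}) − φ′(t_n))/Δt‖²
  ≤ 2·Δt² · ∫₀^T ‖φ‴‖². -/
theorem second_difference_consistency
    {E : Type*} [NormedAddCommGroup E] [NormedSpace ℝ E] [CompleteSpace E]
    (T : ℝ) (hT : 0 < T) (N : ℕ) (hN : 2 ≤ N)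
    (Δt : ℝ) (hΔt : Δt = T / N)
    (φ φ' φ'' φ''' : ℝ → E)
    (hφ' : ∀ t ∈ Set.Icc (0:ℝ) T, HasDerivWithinAt φ (φ' t) (Set.Icc (0:ℝ) T) t)
    (hφ'' : ∀ t ∈ Set.Icc (0:ℝ) T, HasDerivWithinAt φ' (φ'' t) (Set.Icc (0:ℝ) T) t)
    (hφ''' : ∀ t ∈ Set.Icc (0:ℝ) T, HasDerivWithinAt φ'' (φ''' t) (Set.Icc (0:ℝ) T) t)
    (hφ'''c : ContinuousOn φ''' (Set.Icc (0:ℝ) T)) :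
    Δt * ∑ n ∈ Finset.Ico 1 N,
        ‖(Δt ^ 2)⁻¹ • (φ (((n : ℝ) + 1) * Δt) - (2 : ℝ) • φ ((n : ℝ) * Δt)
              + φ (((n : ℝ) - 1) * Δt))
          - Δt⁻¹ • (φ' (((n : ℝ) + 1) * Δt) - φ' ((n : ℝ) * Δt))‖ ^ 2
      ≤ 2 * Δt ^ 2 * ∫ t in (0:ℝ)..T, ‖φ''' t‖ ^ 2 := by
  have hN0 : (0 : ℝ) < N := by exact_mod_cast (by omega : 0 < N)
  have hΔt0 : 0 < Δt := by rw [hΔt]; positivity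
  have hT_eq : T = N * Δt := by rw [hΔt]; field_simp
  have hint : IntervalIntegrable (fun t => ‖φ''' t‖ ^ 2) volume 0 (N * Δt) :=
    hT_eq ▸ (hφ'''c.norm.pow 2).intervalIntegrable_of_Icc hT.le
  have hQ : 0 ≤ ∫ t in (0:ℝ)..T, ‖φ''' t‖ ^ 2 :=
    intervalIntegral.integral_nonneg hT.le fun _ _ => by positivity
  calc _ ≤ Δt * ∑ n ∈ Finset.Ico 1 N,
        Δt / 2 * ∫ t in n * Δt - Δt..n * Δt + Δt, ‖φ''' t‖ ^ 2 := by
        gcongr with n hn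
        obtain ⟨hn1, hnN⟩ := Finset.mem_Ico.1 hn
        have hn1' : (1 : ℝ) ≤ n := by exact_mod_cast hn1
        have hnN' : (n : ℝ) + 1 ≤ N := by exact_mod_cast hnN
        rw [add_one_mul, sub_one_mul]
        exact sq_norm_secondDifferenceQuotient_sub_le hΔt0
          (Icc_subset_Icc (by nlinarith) (by rw [hT_eq]; nlinarith)) hφ' hφ'' hφ''' hφ'''c
    _ = Δt ^ 2 / 2 * ∑ n ∈ Finset.Ico 1 N, ∫ t in n * Δt - Δt..n * Δt + Δt, ‖φ''' t‖ ^ 2 := by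
        rw [← Finset.mul_sum]; ring
    _ ≤ Δt ^ 2 / 2 * (2 * ∫ t in (0:ℝ)..T, ‖φ''' t‖ ^ 2) := by
        gcongr
        exact hT_eq ▸ sum_integral_sub_add_le hΔt0.le hint fun _ _ => by positivity
    _ ≤ 2 * Δt ^ 2 * ∫ t in (0:ℝ)..T, ‖φ''' t‖ ^ 2 := by nlinarith
end

section
/- Assume N ≥ 2 and let φ : ℝ → E be twice continuously differentiable on [0,T]. Then Δt³ · Σ_{n=1}^{N−1} ‖d_{tt} φ^{n+1}‖² ≤ 2·Δt² · ∫_0^T ‖φ″(t)‖² dt. (Boundedness of the scaled discrete second difference, proved in the consistency-error lemma of the paper.) -/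
/-!
Taylor's formula with integral remainder on the two half-cells around a node `m = t_n` writes
the second difference as
`φ(m + h) - 2 φ(m) + φ(m - h) = ∫_m^{m+h} (m + h - s) φ''(s) ds - ∫_{m-h}^m (m - h - s) φ''(s) ds`.
Cauchy–Schwarz bounds the square of each piece by `h³/3` times the integral of `‖φ''‖²` over
its half-cell, so `‖φ(m + h) - 2 φ(m) + φ(m - h)‖² ≤ (2h³/3) ∫_{m-h}^{m+h} ‖φ''‖²`. Summing over
the interior nodes covers every cell of the grid at most twice, which gives the constant
`4/3 ≤ 2`.
-/

open Set MeasureTheory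

theorem integral_mul_sq_le_integral_sq_mul_integral_sq {α : Type*} [MeasurableSpace α]
    {μ : Measure α} {f g : α → ℝ} (hf : Integrable (fun x => f x ^ 2) μ)
    (hg : Integrable (fun x => g x ^ 2) μ) (hfg : Integrable (fun x => f x * g x) μ) :
    (∫ x, f x * g x ∂μ) ^ 2 ≤ (∫ x, f x ^ 2 ∂μ) * ∫ x, g x ^ 2 ∂μ := by
  have hquad : ∀ t : ℝ, 0 ≤ (∫ x, f x ^ 2 ∂μ) * (t * t) + (-2 * ∫ x, f x * g x ∂μ) * t
      + ∫ x, g x ^ 2 ∂μ := by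
    intro t
    have hexpand : ∫ x, (t * f x - g x) ^ 2 ∂μ = (∫ x, f x ^ 2 ∂μ) * (t * t)
        + (-2 * ∫ x, f x * g x ∂μ) * t + ∫ x, g x ^ 2 ∂μ := by
      have hpoint : (fun x => (t * f x - g x) ^ 2)
          = fun x => t ^ 2 * f x ^ 2 - 2 * t * (f x * g x) + g x ^ 2 := by
        funext x; ring
      rw [hpoint, integral_add ((hf.const_mul _).sub' (hfg.const_mul _)) hg,
        integral_sub (hf.const_mul _) (hfg.const_mul _), integral_const_mul, integral_const_mul]
      ring
    exact hexpand ▸ integral_nonneg fun x => sq_nonneg _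
  have hdiscrim := discrim_le_zero hquad
  rw [discrim] at hdiscrim
  nlinarith

theorem integral_const_sub_sq {a b c : ℝ} :
    ∫ s in a..b, (c - s) ^ 2 = ((c - a) ^ 3 - (c - b) ^ 3) / 3 := by
  rw [intervalIntegral.integral_comp_sub_left (fun s => s ^ 2), integral_pow]
  ring

theorem sum_intervalIntegral_le_intervalIntegral {g : ℝ → ℝ} {a : ℕ → ℝ} {m n : ℕ} {lo hi : ℝ}
    (hmn : m ≤ n) (ha : Monotone a) (hlo : lo ≤ a m) (hhi : a n ≤ hi) (hg : 0 ≤ g)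
    (hgi : IntervalIntegrable g volume lo hi) :
    ∑ k ∈ Finset.Ico m n, ∫ x in a k..a (k + 1), g x ≤ ∫ x in lo..hi, g x := by
  have hmem {k : ℕ} (hmk : m ≤ k) (hkn : k ≤ n) : a k ∈ uIcc lo hi := by
    rw [uIcc_of_le (hlo.trans ((ha hmn).trans hhi))]
    exact ⟨hlo.trans (ha hmk), (ha hkn).trans hhi⟩
  have hint : ∀ k ∈ Ico m n, IntervalIntegrable g volume (a k) (a (k + 1)) := by
    rintro k ⟨hmk, hkn⟩
    exact hgi.mono_set (uIcc_subset_uIcc (hmem hmk hkn.le) (hmem (hmk.trans k.le_succ) hkn))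
  rw [intervalIntegral.sum_integral_adjacent_intervals_Ico hmn hint]
  exact intervalIntegral.integral_mono_interval hlo (ha hmn) hhi
    (Filter.Eventually.of_forall hg) hgi

theorem sum_intervalIntegral_adjacent_cells_le {g : ℝ → ℝ} {h : ℝ} {N : ℕ} (hh : 0 ≤ h)
    (hN : 1 ≤ N) (hg : 0 ≤ g) (hgi : IntervalIntegrable g volume 0 (N * h)) :
    ∑ n ∈ Finset.Ico 1 N, ((∫ x in ((n : ℝ) - 1) * h..n * h, g x)
        + ∫ x in (n : ℝ) * h..(n + 1) * h, g x)
      ≤ 2 * ∫ x in (0 : ℝ)..N * h, g x := by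
  have hleft : ∑ n ∈ Finset.Ico 1 N, ∫ x in ((n : ℝ) - 1) * h..n * h, g x
      ≤ ∫ x in (0 : ℝ)..N * h, g x := by
    simpa using sum_intervalIntegral_le_intervalIntegral (a := fun k : ℕ => ((k : ℝ) - 1) * h)
      hN (fun i j hij => by dsimp only; gcongr) (by simp) (by gcongr; linarith) hg hgi
  have hright : ∑ n ∈ Finset.Ico 1 N, ∫ x in (n : ℝ) * h..(n + 1) * h, g x
      ≤ ∫ x in (0 : ℝ)..N * h, g x := by
    simpa using sum_intervalIntegral_le_intervalIntegral (a := fun k : ℕ => (k : ℝ) * h)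
      hN (fun i j hij => by dsimp only; gcongr) (by simpa using hh) le_rfl hg hgi
  rw [Finset.sum_add_distrib]
  linarith

section SecondDerivative

variable {E : Type*} [NormedAddCommGroup E] [NormedSpace ℝ E]

structure HasSecondDerivOn (f f' f'' : ℝ → E) (s : Set ℝ) : Prop where
  hasDerivWithinAt : ∀ t ∈ s, HasDerivWithinAt f (f' t) s t
  hasDerivWithinAt_deriv : ∀ t ∈ s, HasDerivWithinAt f' (f'' t) s t
  continuousOn_deriv2 : ContinuousOn f'' s

variable {f f' f'' : ℝ → E}

theorem HasSecondDerivOn.mono {s t : Set ℝ} (hf : HasSecondDerivOn f f' f'' s) (hts : t ⊆ s) :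
    HasSecondDerivOn f f' f'' t where
  hasDerivWithinAt x hx := (hf.hasDerivWithinAt x (hts hx)).mono hts
  hasDerivWithinAt_deriv x hx := (hf.hasDerivWithinAt_deriv x (hts hx)).mono hts
  continuousOn_deriv2 := hf.continuousOn_deriv2.mono hts

/-- Taylor's formula with integral remainder: `c = a` and `c = b` give the expansions about the
two endpoints. -/
theorem HasSecondDerivOn.integral_sub_smul [CompleteSpace E] {a b : ℝ} (c : ℝ) (hab : a ≤ b)
    (hf : HasSecondDerivOn f f' f'' (Icc a b)) :
    ∫ s in a..b, (c - s) • f'' s = f b - f a + (c - b) • f' b - (c - a) • f' a := by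
  have hderiv : ∀ s ∈ Ioo a b,
      HasDerivAt (fun u => f u + (c - u) • f' u) ((c - s) • f'' s) s := by
    intro s hs
    have hnhds : Icc a b ∈ nhds s := Icc_mem_nhds hs.1 hs.2
    have h1 := (hf.hasDerivWithinAt s (Ioo_subset_Icc_self hs)).hasDerivAt hnhds
    have h2 := (hf.hasDerivWithinAt_deriv s (Ioo_subset_Icc_self hs)).hasDerivAt hnhds
    exact (h1.add (((hasDerivAt_id s).const_sub c).smul h2)).congr_deriv
      (by simp only [id]; module)
  have hcont : ContinuousOn (fun u => f u + (c - u) • f' u) (Icc a b) :=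
    ContinuousOn.add (fun t ht => (hf.hasDerivWithinAt t ht).continuousWithinAt)
      ((continuousOn_const.sub continuousOn_id).smul
        fun t ht => (hf.hasDerivWithinAt_deriv t ht).continuousWithinAt)
  have hint : IntervalIntegrable (fun s => (c - s) • f'' s) volume a b :=
    ((continuousOn_const.sub continuousOn_id).smul hf.continuousOn_deriv2).intervalIntegrable_of_Icc
      hab
  rw [intervalIntegral.integral_eq_sub_of_hasDerivAt_of_le hab hcont hderiv hint]
  abel

theorem norm_integral_smul_sq_le {w : ℝ → ℝ} {g : ℝ → E} {a b : ℝ} (hab : a ≤ b)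
    (hw : ContinuousOn w (Icc a b)) (hg : ContinuousOn g (Icc a b)) :
    ‖∫ s in a..b, w s • g s‖ ^ 2 ≤ (∫ s in a..b, w s ^ 2) * ∫ s in a..b, ‖g s‖ ^ 2 := by
  have hnorm : ‖∫ s in a..b, w s • g s‖ ≤ ∫ s in a..b, |w s| * ‖g s‖ := by
    simpa only [norm_smul, Real.norm_eq_abs] using
      intervalIntegral.norm_integral_le_integral_norm (f := fun s => w s • g s) hab
  have hint {F : ℝ → ℝ} (hF : ContinuousOn F (Icc a b)) : IntegrableOn F (Ioc a b) :=
    hF.integrableOn_Icc.mono_set Ioc_subset_Icc_self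
  calc ‖∫ s in a..b, w s • g s‖ ^ 2
      ≤ (∫ s in a..b, |w s| * ‖g s‖) ^ 2 := pow_le_pow_left₀ (norm_nonneg _) hnorm 2
    _ ≤ (∫ s in a..b, |w s| ^ 2) * ∫ s in a..b, ‖g s‖ ^ 2 := by
      simp only [intervalIntegral.integral_of_le hab]
      exact integral_mul_sq_le_integral_sq_mul_integral_sq (hint (hw.abs.pow 2))
        (hint (hg.norm.pow 2)) (hint (hw.abs.mul hg.norm))
    _ = (∫ s in a..b, w s ^ 2) * ∫ s in a..b, ‖g s‖ ^ 2 := by simp only [sq_abs]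

theorem HasSecondDerivOn.norm_second_difference_sq_le [CompleteSpace E] {m h : ℝ} (hh : 0 ≤ h)
    (hf : HasSecondDerivOn f f' f'' (Icc (m - h) (m + h))) :
    ‖f (m + h) - (2 : ℝ) • f m + f (m - h)‖ ^ 2
      ≤ 2 * h ^ 3 / 3 * ((∫ s in (m - h)..m, ‖f'' s‖ ^ 2) + ∫ s in m..(m + h), ‖f'' s‖ ^ 2) := by
  have hleft := hf.mono (Icc_subset_Icc_right (by linarith : m ≤ m + h))
  have hright := hf.mono (Icc_subset_Icc_left (by linarith : m - h ≤ m))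
  have hsplit : f (m + h) - (2 : ℝ) • f m + f (m - h)
      = (∫ s in m..(m + h), (m + h - s) • f'' s) - ∫ s in (m - h)..m, (m - h - s) • f'' s := by
    rw [hright.integral_sub_smul _ (by linarith), hleft.integral_sub_smul _ (by linarith)]
    module
  have hR := norm_integral_smul_sq_le (w := fun s => m + h - s) (by linarith) (by fun_prop)
    hright.continuousOn_deriv2
  have hL := norm_integral_smul_sq_le (w := fun s => m - h - s) (by linarith) (by fun_prop)
    hleft.continuousOn_deriv2
  rw [integral_const_sub_sq] at hR hL
  set R := ∫ s in m..(m + h), (m + h - s) • f'' s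
  set L := ∫ s in (m - h)..m, (m - h - s) • f'' s
  calc ‖f (m + h) - (2 : ℝ) • f m + f (m - h)‖ ^ 2
      ≤ (‖R‖ + ‖L‖) ^ 2 := hsplit ▸ pow_le_pow_left₀ (norm_nonneg _) (norm_sub_le R L) 2
    _ ≤ 2 * (‖R‖ ^ 2 + ‖L‖ ^ 2) := add_sq_le
    _ ≤ _ := by linarith

theorem HasSecondDerivOn.norm_discrete_second_deriv_sq_le [CompleteSpace E] {m h : ℝ}
    (hh : 0 < h) (hf : HasSecondDerivOn f f' f'' (Icc (m - h) (m + h))) :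
    ‖(h ^ 2)⁻¹ • (f (m + h) - (2 : ℝ) • f m + f (m - h))‖ ^ 2
      ≤ 2 / (3 * h) * ((∫ s in (m - h)..m, ‖f'' s‖ ^ 2) + ∫ s in m..(m + h), ‖f'' s‖ ^ 2) := by
  have hscale (X : ℝ) : ((h ^ 2)⁻¹) ^ 2 * (2 * h ^ 3 / 3 * X) = 2 / (3 * h) * X := by
    field_simp
  rw [norm_smul, mul_pow, norm_inv, norm_pow, Real.norm_of_nonneg hh.le]
  exact (mul_le_mul_of_nonneg_left (hf.norm_second_difference_sq_le hh.le)
    (by positivity)).trans_eq (hscale _)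

end SecondDerivative

/-- Boundedness of the scaled discrete second difference: for φ twice
continuously differentiable on [0,T], with Δt = T/N, tₙ = n·Δt and N ≥ 2,
Δt³ · Σ_{n=1}^{N−1} ‖d_{tt} φ^{n+1}‖² ≤ 2·Δt² · ∫₀^T ‖φ″‖². -/
theorem second_difference_bound
    {E : Type*} [NormedAddCommGroup E] [NormedSpace ℝ E] [CompleteSpace E]
    (T : ℝ) (hT : 0 < T) (N : ℕ) (hN : 2 ≤ N)
    (Δt : ℝ) (hΔt : Δt = T / N)
    (φ φ' φ'' : ℝ → E)
    (hφ' : ∀ t ∈ Set.Icc (0:ℝ) T, HasDerivWithinAt φ (φ' t) (Set.Icc (0:ℝ) T) t)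
    (hφ'' : ∀ t ∈ Set.Icc (0:ℝ) T, HasDerivWithinAt φ' (φ'' t) (Set.Icc (0:ℝ) T) t)
    (hφ''c : ContinuousOn φ'' (Set.Icc (0:ℝ) T)) :
    Δt ^ 3 * ∑ n ∈ Finset.Ico 1 N,
        ‖(Δt ^ 2)⁻¹ • (φ (((n : ℝ) + 1) * Δt) - (2 : ℝ) • φ ((n : ℝ) * Δt)
            + φ (((n : ℝ) - 1) * Δt))‖ ^ 2
      ≤ 2 * Δt ^ 2 * ∫ t in (0:ℝ)..T, ‖φ'' t‖ ^ 2 := by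
  have hΔ : 0 < Δt := hΔt ▸ div_pos hT (by exact_mod_cast (by omega : 0 < N))
  have hTN : T = N * Δt := by rw [hΔt]; field_simp
  have hφ : HasSecondDerivOn φ φ' φ'' (Icc 0 T) := ⟨hφ', hφ'', hφ''c⟩
  have hterm : ∀ n ∈ Finset.Ico 1 N,
      ‖(Δt ^ 2)⁻¹ • (φ (((n : ℝ) + 1) * Δt) - (2 : ℝ) • φ ((n : ℝ) * Δt)
          + φ (((n : ℝ) - 1) * Δt))‖ ^ 2
        ≤ 2 / (3 * Δt) * ((∫ s in ((n : ℝ) - 1) * Δt..n * Δt, ‖φ'' s‖ ^ 2)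
          + ∫ s in (n : ℝ) * Δt..(n + 1) * Δt, ‖φ'' s‖ ^ 2) := by
    intro n hn
    obtain ⟨hn1, hnN⟩ := Finset.mem_Ico.1 hn
    have h1n : (1 : ℝ) ≤ n := by exact_mod_cast hn1
    have hnN' : (n : ℝ) + 1 ≤ N := by exact_mod_cast hnN
    have hcell : Icc (n * Δt - Δt) (n * Δt + Δt) ⊆ Icc 0 T :=
      Icc_subset_Icc (by nlinarith) (by nlinarith)
    simpa only [add_mul, sub_mul, one_mul] using
      (hφ.mono hcell).norm_discrete_second_deriv_sq_le hΔ
  have hcells := sum_intervalIntegral_adjacent_cells_le hΔ.le (by omega : 1 ≤ N)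
    (fun t => sq_nonneg ‖φ'' t‖) (hTN ▸ (hφ''c.norm.pow 2).intervalIntegrable_of_Icc hT.le)
  rw [← hTN] at hcells
  have hS : 0 ≤ ∫ t in (0:ℝ)..T, ‖φ'' t‖ ^ 2 :=
    intervalIntegral.integral_nonneg hT.le fun t _ => sq_nonneg _
  calc _ ≤ Δt ^ 3 * ∑ n ∈ Finset.Ico 1 N, 2 / (3 * Δt) *
          ((∫ s in ((n : ℝ) - 1) * Δt..n * Δt, ‖φ'' s‖ ^ 2)
            + ∫ s in (n : ℝ) * Δt..(n + 1) * Δt, ‖φ'' s‖ ^ 2) := by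
        gcongr with n hn
        exact hterm n hn
    _ = 2 * Δt ^ 2 / 3 * ∑ n ∈ Finset.Ico 1 N,
          ((∫ s in ((n : ℝ) - 1) * Δt..n * Δt, ‖φ'' s‖ ^ 2)
            + ∫ s in (n : ℝ) * Δt..(n + 1) * Δt, ‖φ'' s‖ ^ 2) := by
        rw [← Finset.mul_sum]
        field_simp
    _ ≤ 2 * Δt ^ 2 * ∫ t in (0:ℝ)..T, ‖φ'' t‖ ^ 2 := by nlinarith
end

section
/- Assume N ≥ 2 and let φ : ℝ → E be continuously differentiable on [0,T]. Then Δt · Σ_{n=1}^{N−1} ‖(φ(t_{n+1}) − φ(t_{n−1}))/(2Δt)‖² ≤ ∫_0^T ‖φ′(t)‖² dt. (Central-difference estimate used in the interpolation-error lemma of the paper.) -/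
/-!
Since `‖φ b - φ a‖ ≤ ∫ₐᵇ ‖φ'‖`, Cauchy–Schwarz gives `(b - a) ‖slope φ a b‖² ≤ ∫ₐᵇ ‖φ'‖²`.
The `n`-th term of the sum is such a slope over the window `[t_{n-1}, t_{n+1}]` of width `2Δt`;
the windows cover `[0, T]` twice, and the factor `2` in their width pays for that.
-/

open MeasureTheory Set

theorem sq_intervalIntegral_le_mul_intervalIntegral_sq {f : ℝ → ℝ} {a b : ℝ} (hab : a ≤ b)
    (hf : IntervalIntegrable f volume a b)
    (hf2 : IntervalIntegrable (fun t => f t ^ 2) volume a b) :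
    (∫ t in a..b, f t) ^ 2 ≤ (b - a) * ∫ t in a..b, f t ^ 2 := by
  rcases hab.eq_or_lt with rfl | hlt
  · simp
  have hexpand (L m : ℝ) : ∫ t in a..b, (L * f t - m) ^ 2
      = L ^ 2 * (∫ t in a..b, f t ^ 2) - 2 * L * m * (∫ t in a..b, f t) + (b - a) * m ^ 2 := by
    have hsq (t : ℝ) : (L * f t - m) ^ 2 = L ^ 2 * f t ^ 2 - 2 * L * m * f t + m ^ 2 := by ring
    simp_rw [hsq]
    rw [intervalIntegral.integral_add ((hf2.const_mul _).sub (hf.const_mul _))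
        intervalIntegrable_const,
      intervalIntegral.integral_sub (hf2.const_mul _) (hf.const_mul _),
      intervalIntegral.integral_const_mul, intervalIntegral.integral_const_mul,
      intervalIntegral.integral_const, smul_eq_mul]
  -- `0 ≤ ∫ ((b - a) f - ∫ f)²` is `(b - a)` times the claimed inequality
  have hnonneg := intervalIntegral.integral_nonneg (μ := volume) hab
    fun t _ => sq_nonneg ((b - a) * f t - ∫ t in a..b, f t)
  rw [hexpand] at hnonneg
  have hscaled :
      0 ≤ (b - a) * ((b - a) * (∫ t in a..b, f t ^ 2) - (∫ t in a..b, f t) ^ 2) := by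
    linarith
  linarith [nonneg_of_mul_nonneg_right hscaled (sub_pos.2 hlt)]

theorem sum_intervalIntegral_pred_succ_le_two_mul {g : ℝ → ℝ} {x : ℕ → ℝ} {N : ℕ}
    (hx : Monotone x) (hg : ∀ t, 0 ≤ g t) (hint : IntervalIntegrable g volume (x 0) (x N)) :
    ∑ n ∈ Finset.Ico 1 N, ∫ t in x (n - 1)..x (n + 1), g t
      ≤ 2 * ∫ t in x 0..x N, g t := by
  set F : ℕ → ℝ := fun k => ∫ t in x k..x (k + 1), g t
  have hintF (k : ℕ) (hk : k < N) : IntervalIntegrable g volume (x k) (x (k + 1)) := by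
    refine hint.mono_set ?_
    rw [uIcc_of_le (hx k.le_succ), uIcc_of_le (hx (Nat.zero_le N))]
    exact Icc_subset_Icc (hx (Nat.zero_le k)) (hx hk)
  have hF_nonneg (k : ℕ) : 0 ≤ F k :=
    intervalIntegral.integral_nonneg (hx k.le_succ) fun t _ => hg t
  have hsplit (n : ℕ) (hn : n ∈ Finset.Ico 1 N) :
      ∫ t in x (n - 1)..x (n + 1), g t = F (n - 1) + F n := by
    obtain ⟨hn1, hnN⟩ := Finset.mem_Ico.1 hn
    have hn' : n - 1 + 1 = n := Nat.sub_add_cancel hn1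
    have hadj := intervalIntegral.integral_add_adjacent_intervals
      (hn' ▸ hintF (n - 1) (by omega)) (hintF n hnN)
    rw [← hadj]
    simp only [F, hn']
  have hshift : ∑ n ∈ Finset.Ico 1 N, F (n - 1) ≤ ∑ k ∈ Finset.range N, F k := by
    rw [Finset.sum_Ico_eq_sum_range]
    simp only [Nat.add_sub_cancel_left]
    exact Finset.sum_le_sum_of_subset_of_nonneg (Finset.range_subset_range.2 (Nat.sub_le N 1))
      fun k _ _ => hF_nonneg k
  have hrestrict : ∑ n ∈ Finset.Ico 1 N, F n ≤ ∑ k ∈ Finset.range N, F k :=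
    Finset.sum_le_sum_of_subset_of_nonneg
      (fun k hk => Finset.mem_range.2 (Finset.mem_Ico.1 hk).2)
      fun k _ _ => hF_nonneg k
  have htotal : ∑ k ∈ Finset.range N, F k = ∫ t in x 0..x N, g t :=
    intervalIntegral.sum_integral_adjacent_intervals hintF
  rw [Finset.sum_congr rfl hsplit, Finset.sum_add_distrib]
  linarith

section

variable {E : Type*} [NormedAddCommGroup E] [NormedSpace ℝ E] {φ φ' : ℝ → E} {a b : ℝ}

theorem norm_sub_sq_le_mul_integral_norm_deriv_sq (hab : a ≤ b)
    (hφ : ∀ t ∈ Icc a b, HasDerivWithinAt φ (φ' t) (Icc a b) t)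
    (hφ' : ContinuousOn φ' (Icc a b)) :
    ‖φ b - φ a‖ ^ 2 ≤ (b - a) * ∫ t in a..b, ‖φ' t‖ ^ 2 := by
  have hderiv (t : ℝ) (ht : t ∈ Ioo a b) : HasDerivAt φ (φ' t) t :=
    (hφ t (Ioo_subset_Icc_self ht)).hasDerivAt (Icc_mem_nhds ht.1 ht.2)
  have hint : IntervalIntegrable (‖φ' ·‖) volume a b := hφ'.norm.intervalIntegrable_of_Icc hab
  have hdisp : ‖φ b - φ a‖ ≤ ∫ t in a..b, ‖φ' t‖ :=
    norm_sub_le_integral_of_norm_deriv_le_of_le hab (fun t ht => (hφ t ht).continuousWithinAt)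
      (fun t ht => (hderiv t ht).differentiableAt.differentiableWithinAt)
      (ae_of_all _ fun t ht => (congrArg norm (hderiv t ht).deriv).le) hint
  calc ‖φ b - φ a‖ ^ 2 ≤ (∫ t in a..b, ‖φ' t‖) ^ 2 := by gcongr
    _ ≤ (b - a) * ∫ t in a..b, ‖φ' t‖ ^ 2 :=
      sq_intervalIntegral_le_mul_intervalIntegral_sq hab hint
        ((hφ'.norm.pow 2).intervalIntegrable_of_Icc hab)

theorem sub_mul_norm_slope_sq_le_integral_norm_deriv_sq (hab : a ≤ b)
    (hφ : ∀ t ∈ Icc a b, HasDerivWithinAt φ (φ' t) (Icc a b) t)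
    (hφ' : ContinuousOn φ' (Icc a b)) :
    (b - a) * ‖slope φ a b‖ ^ 2 ≤ ∫ t in a..b, ‖φ' t‖ ^ 2 := by
  rcases hab.eq_or_lt with rfl | hlt
  · simp
  have hpos : 0 < b - a := sub_pos.2 hlt
  rw [slope_def_module, norm_smul, mul_pow, norm_inv, Real.norm_of_nonneg hpos.le]
  calc (b - a) * ((b - a)⁻¹ ^ 2 * ‖φ b - φ a‖ ^ 2)
      ≤ (b - a) * ((b - a)⁻¹ ^ 2 * ((b - a) * ∫ t in a..b, ‖φ' t‖ ^ 2)) := by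
        gcongr
        exact norm_sub_sq_le_mul_integral_norm_deriv_sq hab hφ hφ'
    _ = ∫ t in a..b, ‖φ' t‖ ^ 2 := by
        field_simp

theorem sum_sub_mul_norm_slope_sq_le_two_mul_integral {x : ℕ → ℝ} {N : ℕ}
    (hx : Monotone x)
    (hφ : ∀ t ∈ Icc (x 0) (x N), HasDerivWithinAt φ (φ' t) (Icc (x 0) (x N)) t)
    (hφ' : ContinuousOn φ' (Icc (x 0) (x N))) :
    ∑ n ∈ Finset.Ico 1 N, (x (n + 1) - x (n - 1)) * ‖slope φ (x (n - 1)) (x (n + 1))‖ ^ 2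
      ≤ 2 * ∫ t in x 0..x N, ‖φ' t‖ ^ 2 := by
  calc ∑ n ∈ Finset.Ico 1 N,
        (x (n + 1) - x (n - 1)) * ‖slope φ (x (n - 1)) (x (n + 1))‖ ^ 2
      ≤ ∑ n ∈ Finset.Ico 1 N, ∫ t in x (n - 1)..x (n + 1), ‖φ' t‖ ^ 2 := by
        refine Finset.sum_le_sum fun n hn => ?_
        have hsub : Icc (x (n - 1)) (x (n + 1)) ⊆ Icc (x 0) (x N) :=
          Icc_subset_Icc (hx (Nat.zero_le _)) (hx (Finset.mem_Ico.1 hn).2)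
        exact sub_mul_norm_slope_sq_le_integral_norm_deriv_sq (hx (by omega))
          (fun t ht => (hφ t (hsub ht)).mono hsub) (hφ'.mono hsub)
    _ ≤ 2 * ∫ t in x 0..x N, ‖φ' t‖ ^ 2 :=
        sum_intervalIntegral_pred_succ_le_two_mul hx (fun t => sq_nonneg ‖φ' t‖)
          ((hφ'.norm.pow 2).intervalIntegrable_of_Icc (hx (Nat.zero_le N)))

end

theorem central_difference_estimate_general
    {E : Type*} [NormedAddCommGroup E] [NormedSpace ℝ E]
    (T : ℝ) (hT : 0 < T) (N : ℕ) (hN : 2 ≤ N)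
    (Δt : ℝ) (hΔt : Δt = T / N)
    (φ φ' : ℝ → E)
    (hφ' : ∀ t ∈ Set.Icc (0:ℝ) T, HasDerivWithinAt φ (φ' t) (Set.Icc (0:ℝ) T) t)
    (hφ'c : ContinuousOn φ' (Set.Icc (0:ℝ) T)) :
    Δt * ∑ n ∈ Finset.Ico 1 N,
        ‖(2 * Δt)⁻¹ • (φ (((n : ℝ) + 1) * Δt) - φ (((n : ℝ) - 1) * Δt))‖ ^ 2
      ≤ ∫ t in (0:ℝ)..T, ‖φ' t‖ ^ 2 := by
  have hNpos : (0 : ℝ) < N := by exact_mod_cast (by omega : 0 < N)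
  have hΔpos : 0 < Δt := hΔt ▸ div_pos hT hNpos
  let x : ℕ → ℝ := fun k => k * Δt
  have hx : Monotone x := fun i j hij => by simp only [x]; gcongr
  have hx0 : x 0 = 0 := by simp [x]
  have hxN : x N = T := by simp only [x, hΔt]; field_simp
  have hterm (n : ℕ) (hn : n ∈ Finset.Ico 1 N) :
      Δt * ‖(2 * Δt)⁻¹ • (φ (((n : ℝ) + 1) * Δt) - φ (((n : ℝ) - 1) * Δt))‖ ^ 2
        = 2⁻¹ * ((x (n + 1) - x (n - 1)) * ‖slope φ (x (n - 1)) (x (n + 1))‖ ^ 2) := by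
    have hwidth : ((n : ℝ) + 1) * Δt - ((n : ℝ) - 1) * Δt = 2 * Δt := by ring
    simp only [x, Nat.cast_pred (Finset.mem_Ico.1 hn).1, Nat.cast_succ, slope_def_module, hwidth]
    ring
  calc Δt * ∑ n ∈ Finset.Ico 1 N,
        ‖(2 * Δt)⁻¹ • (φ (((n : ℝ) + 1) * Δt) - φ (((n : ℝ) - 1) * Δt))‖ ^ 2
      = 2⁻¹ * ∑ n ∈ Finset.Ico 1 N,
          (x (n + 1) - x (n - 1)) * ‖slope φ (x (n - 1)) (x (n + 1))‖ ^ 2 := by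
        rw [Finset.mul_sum, Finset.mul_sum]
        exact Finset.sum_congr rfl hterm
    _ ≤ 2⁻¹ * (2 * ∫ t in x 0..x N, ‖φ' t‖ ^ 2) := by
        gcongr
        exact sum_sub_mul_norm_slope_sq_le_two_mul_integral hx (by rwa [hx0, hxN])
          (by rwa [hx0, hxN])
    _ = ∫ t in (0:ℝ)..T, ‖φ' t‖ ^ 2 := by
        rw [hx0, hxN]
        ring

/-- Central-difference estimate: for φ continuously differentiable on [0,T],
with Δt = T/N, tₙ = n·Δt and N ≥ 2,
Δt · Σ_{n=1}^{N−1} ‖(φ(t_{n+1}) − φ(t_{n−1}))/(2Δt)‖² ≤ ∫₀^T ‖φ′‖². -/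
theorem central_difference_estimate
    {E : Type*} [NormedAddCommGroup E] [NormedSpace ℝ E] [CompleteSpace E]
    (T : ℝ) (hT : 0 < T) (N : ℕ) (hN : 2 ≤ N)
    (Δt : ℝ) (hΔt : Δt = T / N)
    (φ φ' : ℝ → E)
    (hφ' : ∀ t ∈ Set.Icc (0:ℝ) T, HasDerivWithinAt φ (φ' t) (Set.Icc (0:ℝ) T) t)
    (hφ'c : ContinuousOn φ' (Set.Icc (0:ℝ) T)) :
    Δt * ∑ n ∈ Finset.Ico 1 N,
        ‖(2 * Δt)⁻¹ • (φ (((n : ℝ) + 1) * Δt) - φ (((n : ℝ) - 1) * Δt))‖ ^ 2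
      ≤ ∫ t in (0:ℝ)..T, ‖φ' t‖ ^ 2 :=
  central_difference_estimate_general T hT N hN Δt hΔt φ φ' hφ' hφ'c
end
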